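/- arXiv:1507.03064 — 4 statements merged into one kernel-verified Lean document; each statement's English description precedes it below -/
import Mathlib

section
/- Let Ω be the ℚ(v)-vector space with basis {ω_s : s ∈ ℤ}, and define operators on Ω by u_i^+ · ω_s = δ_{i+1, s̄} ω_{s−1}, u_i^− · ω_s = δ_{i, s̄} ω_{s+1}, K_i · ω_s = v^{δ_{i,s̄} − δ_{i+1,s̄}} ω_s for i ∈ ℤ/nℤ. Then these operators satisfy [u_i^+, u_j^−] = δ_{i,j} (K_i − K_i^{−1})/(v − v^{−1}) as operators on Ω. -/
noncomputable section

open Finsupp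

/-- The natural representation `Ω`: the `ℚ(v)`-vector space with basis `{ω_s : s ∈ ℤ}`,
encoded as `ℤ →₀ ℚ(v)` with `ω_s = single s 1`. -/
abbrev Omega : Type := ℤ →₀ RatFunc ℚ

/-- `v ∈ ℚ(v)`. -/
abbrev vv : RatFunc ℚ := RatFunc.X

/-- `u_i^+ · ω_s = δ_{i+1, s̄} ω_{s-1}`, where `s̄` is the class of `s` in `ℤ/nℤ`. -/
def up (n : ℕ) (i : ZMod n) : Omega →ₗ[RatFunc ℚ] Omega :=
  Finsupp.lsum (RatFunc ℚ) fun s : ℤ =>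
    if ((s : ZMod n) = i + 1) then Finsupp.lsingle (s - 1) else 0

/-- `u_i^- · ω_s = δ_{i, s̄} ω_{s+1}`. -/
def um (n : ℕ) (i : ZMod n) : Omega →ₗ[RatFunc ℚ] Omega :=
  Finsupp.lsum (RatFunc ℚ) fun s : ℤ =>
    if ((s : ZMod n) = i) then Finsupp.lsingle (s + 1) else 0

/-- `K_i · ω_s = v^(δ_{i,s̄} - δ_{i+1,s̄}) ω_s`. -/
def Kop (n : ℕ) (i : ZMod n) : Omega →ₗ[RatFunc ℚ] Omega :=
  Finsupp.lsum (RatFunc ℚ) fun s : ℤ =>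
    vv ^ (((if (s : ZMod n) = i then 1 else 0) - (if (s : ZMod n) = i + 1 then 1 else 0) : ℤ)) •
      Finsupp.lsingle s

/-- `K_i^{-1} · ω_s = v^(-δ_{i,s̄} + δ_{i+1,s̄}) ω_s`. -/
def Kinv (n : ℕ) (i : ZMod n) : Omega →ₗ[RatFunc ℚ] Omega :=
  Finsupp.lsum (RatFunc ℚ) fun s : ℤ =>
    vv ^ ((-(if (s : ZMod n) = i then 1 else 0) + (if (s : ZMod n) = i + 1 then 1 else 0) : ℤ)) •
      Finsupp.lsingle s

/-!
On the basis vector `ω_s` both `u_i^+ u_j^-` and `u_j^- u_i^+` act diagonally, by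
`δ_{i,s̄} δ_{j,s̄}` and `δ_{i+1,s̄} δ_{j+1,s̄}`, so the commutator vanishes for `i ≠ j` and acts by the
`K_i`-weight `w = δ_{i,s̄} - δ_{i+1,s̄}` for `i = j`. Since `w ∈ {-1, 0, 1}`, this weight equals
`(v^w - v^{-w}) / (v - v⁻¹)`, the eigenvalue of `(K_i - K_i^{-1})/(v - v^{-1})` on `ω_s`.
-/

lemma zpow_sub_zpow_neg_of_abs_le_one {R : Type*} [DivisionRing R] (x : R) {d : ℤ}
    (hd : |d| ≤ 1) : x ^ d - x ^ (-d) = (x - x⁻¹) * d := by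
  obtain rfl | rfl | rfl : d = -1 ∨ d = 0 ∨ d = 1 := by rw [abs_le] at hd; omega
  all_goals simp

lemma RatFunc.X_sub_X_inv_ne_zero {K : Type*} [Field K] : (X : RatFunc K) - X⁻¹ ≠ 0 := by
  intro h
  have hsq : (X : RatFunc K) ^ 2 = 1 := by
    rw [sq]
    nth_rw 1 [sub_eq_zero.mp h]
    exact inv_mul_cancel₀ X_ne_zero
  refine transcendental_X (K := K) ⟨Polynomial.X ^ 2 - Polynomial.C 1,
    Polynomial.X_pow_sub_C_ne_zero two_pos 1, ?_⟩
  simp [hsq]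

def kWeight (n : ℕ) (i : ZMod n) (s : ℤ) : ℤ :=
  (if (s : ZMod n) = i then 1 else 0) - (if (s : ZMod n) = i + 1 then 1 else 0)

lemma abs_kWeight_le_one (n : ℕ) (i : ZMod n) (s : ℤ) : |kWeight n i s| ≤ 1 := by
  unfold kWeight
  split_ifs <;> norm_num

section single

variable (n : ℕ) (i j : ZMod n) (s : ℤ) (c : RatFunc ℚ)

lemma up_single :
    up n i (single s c) = if (s : ZMod n) = i + 1 then single (s - 1) c else 0 := by
  rw [up, lsum_single]
  split_ifs <;> rfl

lemma um_single :
    um n i (single s c) = if (s : ZMod n) = i then single (s + 1) c else 0 := by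
  rw [um, lsum_single]
  split_ifs <;> rfl

lemma Kop_single : Kop n i (single s c) = vv ^ kWeight n i s • single s c := by
  simp [Kop, kWeight]

lemma Kinv_single : Kinv n i (single s c) = vv ^ (-kWeight n i s) • single s c := by
  simp [Kinv, kWeight, neg_add_eq_sub]

lemma up_comp_um_single :
    (up n i ∘ₗ um n j) (single s c) =
      if (s : ZMod n) = j ∧ (s : ZMod n) = i then single s c else 0 := by
  by_cases hj : (s : ZMod n) = j <;>
    simp [um_single, up_single, hj]

lemma um_comp_up_single :
    (um n j ∘ₗ up n i) (single s c) =
      if (s : ZMod n) = i + 1 ∧ (s : ZMod n) = j + 1 then single s c else 0 := by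
  by_cases hi : (s : ZMod n) = i + 1 <;>
    simp [um_single, up_single, hi]

lemma commutator_up_um_single :
    (up n i ∘ₗ um n j - um n j ∘ₗ up n i) (single s c) =
      if i = j then (kWeight n i s : RatFunc ℚ) • single s c else 0 := by
  rw [LinearMap.sub_apply, up_comp_um_single, um_comp_up_single]
  by_cases hij : i = j
  · subst hij
    simp only [and_self, if_pos, kWeight, Int.cast_sub, Int.cast_ite, Int.cast_one, Int.cast_zero,
      sub_smul, ite_smul, one_smul, zero_smul]
  · have h₁ : ¬((s : ZMod n) = j ∧ (s : ZMod n) = i) := fun h => hij (h.2.symm.trans h.1)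
    have h₂ : ¬((s : ZMod n) = i + 1 ∧ (s : ZMod n) = j + 1) := fun h =>
      hij (add_right_cancel (h.1.symm.trans h.2))
    rw [if_neg h₁, if_neg h₂, if_neg hij, sub_zero]

end single

theorem stmt9_general (n : ℕ) (i j : ZMod n) :
    up n i ∘ₗ um n j - um n j ∘ₗ up n i =
      if i = j then (vv - vv⁻¹)⁻¹ • (Kop n i - Kinv n i) else 0 := by
  refine Finsupp.lhom_ext fun s c => ?_
  rw [commutator_up_um_single]
  split_ifs with hij
  · rw [LinearMap.smul_apply, LinearMap.sub_apply, Kop_single, Kinv_single, ← sub_smul, smul_smul,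
      zpow_sub_zpow_neg_of_abs_le_one _ (abs_kWeight_le_one n i s),
      inv_mul_cancel_left₀ RatFunc.X_sub_X_inv_ne_zero]
  · rfl

/-- On the natural representation `Ω` of `𝔇(Δ_n)`, the operators `u_i^±`, `K_i^{±1}` satisfy
`[u_i^+, u_j^-] = δ_{i,j} (K_i - K_i^{-1})/(v - v^{-1})`. -/
theorem stmt9 (n : ℕ) (hn : 2 ≤ n) (i j : ZMod n) :
    up n i ∘ₗ um n j - um n j ∘ₗ up n i =
      if i = j then (vv - vv⁻¹)⁻¹ • (Kop n i - Kinv n i) else 0 :=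
  stmt9_general n i j

end
end

section
/- Let λ = (λ_1, ..., λ_t) be an n-regular partition (λ_s > λ_{s+n−1} whenever both are defined). Then the multisegment m_λ = ∑_{s=1}^t [(1−s) mod n, λ_s] over ℤ/nℤ is aperiodic: for each l ≥ 1, there exists i ∈ ℤ/nℤ such that the multiplicity of the segment [i, l] in m_λ is zero. Conversely, if m_λ is aperiodic then λ is n-regular. -/
/-- A partition, encoded as a weakly decreasing eventually-zero function `ℕ → ℕ`
(`l s` is the part `λ_{s+1}`, i.e. parts are 0-indexed). -/
def IsPartitionFun (l : ℕ → ℕ) : Prop := Antitone l ∧ ∃ N, ∀ j, N ≤ j → l j = 0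

/-- `λ` is `n`-regular: no (positive) part value is repeated `n` or more times; with 0-indexed
parts, `λ_{s+1} > λ_{s+n}` whenever the part `λ_{s+n}` is nonzero. -/
def NRegular (n : ℕ) (l : ℕ → ℕ) : Prop :=
  ∀ s : ℕ, 0 < l (s + (n - 1)) → l (s + (n - 1)) < l s

/-- The multisegment `m_λ = ∑_{a≥1} [(1-a) mod n, λ_a]` over `ℤ/nℤ` is aperiodic: for each
length `L ≥ 1` there is a vertex `i ∈ ℤ/nℤ` such that no segment `[i, L]` occurs in `m_λ`,
i.e. no (0-indexed) `s` has `λ_{s+1} = L` and `-s ≡ i (mod n)`. -/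
def Aperiodic (n : ℕ) (l : ℕ → ℕ) : Prop :=
  ∀ L : ℕ, 1 ≤ L → ∃ i : ZMod n, ∀ s : ℕ, ¬(l s = L ∧ (-(s : ZMod n)) = i)

section

variable {n : ℕ} {l : ℕ → ℕ}

theorem ZMod.natCast_ne_natCast_of_lt_of_lt_add {s t : ℕ} (hst : s < t) (hts : t < s + n) :
    (s : ZMod n) ≠ t := by
  rw [Ne, ZMod.natCast_eq_natCast_iff]
  intro h
  have := h.eq_of_abs_lt (by rw [abs_lt]; omega)
  omega

theorem ZMod.exists_lt_natCast_add_eq [NeZero n] (s : ℕ) (i : ZMod n) :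
    ∃ x < n, ((s + x : ℕ) : ZMod n) = i :=
  ⟨(i - s).val, ZMod.val_lt _, by push_cast [ZMod.natCast_val, ZMod.cast_id]; ring⟩

theorem NRegular.lt_add_of_eq (hreg : NRegular n l) (hanti : Antitone l) {a s : ℕ}
    (ha : 0 < l a) (hs : l s = l a) : s < a + (n - 1) := by
  by_contra! h
  have hge : l a ≤ l (a + (n - 1)) := hs ▸ hanti h
  exact (hreg a (ha.trans_le hge)).not_ge hge

theorem Aperiodic.of_nRegular (hanti : Antitone l) (hreg : NRegular n l) :
    Aperiodic n l := by
  intro L hL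
  by_cases hex : ∃ s, l s = L
  swap
  · exact ⟨0, fun s h => hex ⟨s, h.1⟩⟩
  classical
  set a := Nat.find hex
  have ha : l a = L := Nat.find_spec hex
  -- the indices with `l s = L` form an interval `[a, a + n - 1)`, which misses the class of `a + n - 1`
  refine ⟨-((a + (n - 1) : ℕ) : ZMod n), fun s ⟨hs, hi⟩ => ?_⟩
  have has : a ≤ s := Nat.find_min' hex hs
  have hsa : s < a + (n - 1) := hreg.lt_add_of_eq hanti (by omega) (hs.trans ha.symm)
  exact ZMod.natCast_ne_natCast_of_lt_of_lt_add hsa (by omega) (neg_injective hi)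

theorem NRegular.of_aperiodic [NeZero n] (hanti : Antitone l) (hap : Aperiodic n l) :
    NRegular n l := by
  intro s hpos
  by_contra! hle
  have heq : l (s + (n - 1)) = l s := le_antisymm (hanti (by omega)) hle
  -- the `n` consecutive indices `s, …, s + n - 1` all carry the value `l s` and meet every class
  obtain ⟨i, hi⟩ := hap (l s) (by omega)
  obtain ⟨x, hxn, hx⟩ := ZMod.exists_lt_natCast_add_eq s (-i)
  have hlx : l (s + x) = l s :=
    le_antisymm (hanti (by omega)) (heq ▸ hanti (by omega))
  exact hi (s + x) ⟨hlx, by rw [hx, neg_neg]⟩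

end

/-- A partition `λ` is `n`-regular if and only if the associated multisegment `m_λ` over
`ℤ/nℤ` is aperiodic. -/
theorem stmt17 (n : ℕ) (hn : 2 ≤ n) (l : ℕ → ℕ) (hl : IsPartitionFun l) :
    NRegular n l ↔ Aperiodic n l := by
  have : NeZero n := ⟨by omega⟩
  exact ⟨Aperiodic.of_nRegular hl.1, NRegular.of_aperiodic hl.1⟩
end

section
/- For the ladder construction: let λ = (λ_1,...,λ_t) be an n-regular partition, s maximal with λ_1 = ... = λ_s > λ_{s+1}, and k ≥ 0 maximal such that λ_{s+l(n−1)+1} = ... = λ_{s+(l+1)(n−1)} and λ_{s+l(n−1)} = λ_{s+l(n−1)+1} + 1 for all 0 ≤ l ≤ k−1. Define μ by μ_a = λ_a − 1 if a = s + l(n−1) for some 0 ≤ l ≤ k, and μ_a = λ_a otherwise. Then μ is again an n-regular partition. -/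
/-!
Write `m = n - 1`. Lowering the ladder positions `s + j m` keeps `μ` weakly decreasing: below a
lower rung `j < k` the part drops by exactly one anyway, and after the top rung `s + k m` the part
drops strictly unless it is already zero, since by `n`-regularity a part equal to its successor
there would have to be zero. For regularity, two ladder positions `m` apart lie on consecutive
rungs, between which `λ` is constant, so `μ` drops there by one; and from the top rung onwards
the maximality of `k` forces a drop of at least two within the next `m` steps.
-/

namespace LadderMethod

abbrev IsLadderPos (s m k a : ℕ) : Prop := ∃ j ≤ k, a = s + j * m

def IsRung (l : ℕ → ℕ) (s m j : ℕ) : Prop :=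
  (∀ a b, s + j * m + 1 ≤ a → a ≤ b → b ≤ s + (j + 1) * m → l a = l b) ∧
    l (s + j * m) = l (s + j * m + 1) + 1

/-- The partition `μ` of the ladder method. -/
def lower (l : ℕ → ℕ) (s m k a : ℕ) : ℕ :=
  if IsLadderPos s m k a then l a - 1 else l a

variable {l : ℕ → ℕ} {s m k : ℕ}

theorem lower_le (a : ℕ) : lower l s m k a ≤ l a := by
  unfold lower; split <;> omega

theorem lower_of_isLadderPos {a : ℕ} (h : IsLadderPos s m k a) : lower l s m k a = l a - 1 :=
  if_pos h

theorem lower_of_not_isLadderPos {a : ℕ} (h : ¬IsLadderPos s m k a) : lower l s m k a = l a :=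
  if_neg h

theorem isLadderPos_add_iff (hm : 1 ≤ m) {j : ℕ} :
    IsLadderPos s m k (s + j * m + m) ↔ j < k := by
  constructor
  · rintro ⟨i, hik, hi⟩
    have : (j + 1) * m = i * m := by linarith [add_one_mul j m]
    have := Nat.eq_of_mul_eq_mul_right hm this
    omega
  · intro hjk
    exact ⟨j + 1, hjk, by ring⟩

/-- At the top rung, a part equal to its successor must be zero: on the rung below, the same value
recurs `n` times in a row. -/
theorem top_eq_zero_of_succ_eq (hm : 1 ≤ m)
    (hreg : ∀ a : ℕ, 1 ≤ a → 0 < l (a + m) → l (a + m) < l a)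
    (hs1 : 1 ≤ s) (hsmax : l (s + 1) < l s) (hladder : ∀ j, j < k → IsRung l s m j)
    (heq : l (s + k * m + 1) = l (s + k * m)) : l (s + k * m) = 0 := by
  obtain _ | k := k
  · simp only [zero_mul, add_zero] at heq; omega
  have hshift : s + k * m + 1 + m = s + (k + 1) * m + 1 := by ring
  have hconst := (hladder k k.lt_succ_self).1 (s + k * m + 1) (s + (k + 1) * m) le_rfl
    (by nlinarith) le_rfl
  by_contra hne
  have hr := hreg (s + k * m + 1) (by omega) (by rw [hshift]; omega)
  rw [hshift] at hr
  omega

theorem top_succ_lt_or_eq_zero (hm : 1 ≤ m)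
    (hanti : ∀ a b : ℕ, 1 ≤ a → a ≤ b → l b ≤ l a)
    (hreg : ∀ a : ℕ, 1 ≤ a → 0 < l (a + m) → l (a + m) < l a)
    (hs1 : 1 ≤ s) (hsmax : l (s + 1) < l s) (hladder : ∀ j, j < k → IsRung l s m j) :
    l (s + k * m + 1) < l (s + k * m) ∨ l (s + k * m) = 0 := by
  have hle := hanti (s + k * m) (s + k * m + 1) (by omega) (by omega)
  rcases hle.lt_or_eq with hlt | heq
  · exact Or.inl hlt
  · exact Or.inr (top_eq_zero_of_succ_eq hm hreg hs1 hsmax hladder heq)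

/-- Since rung `k` does not exist, within `m` steps after `s + k m` either the drop right after it
exceeds one or a further drop occurs. -/
theorem top_add_drop_or_eq_zero (hm : 1 ≤ m)
    (hanti : ∀ a b : ℕ, 1 ≤ a → a ≤ b → l b ≤ l a)
    (hreg : ∀ a : ℕ, 1 ≤ a → 0 < l (a + m) → l (a + m) < l a)
    (hs1 : 1 ≤ s) (hsmax : l (s + 1) < l s) (hladder : ∀ j, j < k → IsRung l s m j)
    (hkmax : ¬IsRung l s m k) :
    l (s + (k + 1) * m) + 1 < l (s + k * m) ∨ l (s + (k + 1) * m) = 0 := by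
  have hnext : s + (k + 1) * m = s + k * m + m := by ring
  have hle1 := hanti (s + k * m) (s + k * m + 1) (by omega) (by omega)
  have hle2 := hanti (s + k * m + 1) (s + (k + 1) * m) (by omega) (by omega)
  by_cases hdrop : l (s + k * m) = l (s + k * m + 1) + 1
  · have hnonconst : ¬∀ a b, s + k * m + 1 ≤ a → a ≤ b → b ≤ s + (k + 1) * m → l a = l b :=
      fun h => hkmax ⟨h, hdrop⟩
    push Not at hnonconst
    obtain ⟨a, b, ha, hab, hb, hne⟩ := hnonconst
    have h1 := hanti (s + k * m + 1) a (by omega) ha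
    have h2 := hanti a b (by omega) hab
    have h3 := hanti b (s + (k + 1) * m) (by omega) hb
    omega
  · rcases top_succ_lt_or_eq_zero hm hanti hreg hs1 hsmax hladder with h | h <;> omega

theorem lower_succ_le (hm : 1 ≤ m)
    (hanti : ∀ a b : ℕ, 1 ≤ a → a ≤ b → l b ≤ l a)
    (hreg : ∀ a : ℕ, 1 ≤ a → 0 < l (a + m) → l (a + m) < l a)
    (hs1 : 1 ≤ s) (hsmax : l (s + 1) < l s) (hladder : ∀ j, j < k → IsRung l s m j)
    {a : ℕ} (ha : 1 ≤ a) : lower l s m k (a + 1) ≤ lower l s m k a := by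
  have hnext := lower_le (l := l) (s := s) (m := m) (k := k) (a + 1)
  have hle := hanti a (a + 1) ha (by omega)
  by_cases hpos : IsLadderPos s m k a
  · rw [lower_of_isLadderPos hpos]
    obtain ⟨j, hjk, rfl⟩ := hpos
    rcases hjk.lt_or_eq with hjk | rfl
    · have := (hladder j hjk).2
      omega
    · rcases top_succ_lt_or_eq_zero hm hanti hreg hs1 hsmax hladder with h | h <;> omega
  · rw [lower_of_not_isLadderPos hpos]
    omega

theorem lower_anti (hm : 1 ≤ m)
    (hanti : ∀ a b : ℕ, 1 ≤ a → a ≤ b → l b ≤ l a)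
    (hreg : ∀ a : ℕ, 1 ≤ a → 0 < l (a + m) → l (a + m) < l a)
    (hs1 : 1 ≤ s) (hsmax : l (s + 1) < l s) (hladder : ∀ j, j < k → IsRung l s m j)
    {a b : ℕ} (ha : 1 ≤ a) (hab : a ≤ b) : lower l s m k b ≤ lower l s m k a := by
  have hanti' : Antitone fun i => lower l s m k (i + 1) :=
    antitone_nat_of_succ_le fun i => lower_succ_le hm hanti hreg hs1 hsmax hladder (by omega)
  have := hanti' (show a - 1 ≤ b - 1 by omega)
  simp only at this
  rwa [Nat.sub_add_cancel ha, Nat.sub_add_cancel (ha.trans hab)] at this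

theorem lower_add_lt (hm : 1 ≤ m)
    (hanti : ∀ a b : ℕ, 1 ≤ a → a ≤ b → l b ≤ l a)
    (hreg : ∀ a : ℕ, 1 ≤ a → 0 < l (a + m) → l (a + m) < l a)
    (hs1 : 1 ≤ s) (hsmax : l (s + 1) < l s) (hladder : ∀ j, j < k → IsRung l s m j)
    (hkmax : ¬IsRung l s m k) {a : ℕ} (ha : 1 ≤ a) (hpos : 0 < lower l s m k (a + m)) :
    lower l s m k (a + m) < lower l s m k a := by
  have hle := hanti a (a + m) ha (by omega)
  by_cases hfar : IsLadderPos s m k (a + m)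
  · rw [lower_of_isLadderPos hfar] at hpos ⊢
    by_cases hnear : IsLadderPos s m k a
    · rw [lower_of_isLadderPos hnear]
      obtain ⟨j, -, rfl⟩ := hnear
      have hjk := (isLadderPos_add_iff hm).1 hfar
      have hnext : s + j * m + m = s + (j + 1) * m := by ring
      have hconst := (hladder j hjk).1 (s + j * m + 1) (s + (j + 1) * m) le_rfl
        (by nlinarith) le_rfl
      have hdrop := (hladder j hjk).2
      rw [hnext] at hpos ⊢
      omega
    · rw [lower_of_not_isLadderPos hnear]
      omega
  · rw [lower_of_not_isLadderPos hfar] at hpos ⊢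
    by_cases hnear : IsLadderPos s m k a
    · rw [lower_of_isLadderPos hnear]
      obtain ⟨j, hjk, rfl⟩ := hnear
      obtain rfl : j = k := by
        by_contra hne
        exact hfar ((isLadderPos_add_iff hm).2 (by omega))
      have hnext : s + j * m + m = s + (j + 1) * m := by ring
      rw [hnext] at hpos ⊢
      rcases top_add_drop_or_eq_zero hm hanti hreg hs1 hsmax hladder hkmax with h | h <;> omega
    · rw [lower_of_not_isLadderPos hnear]
      exact hreg a ha hpos

end LadderMethod

open LadderMethod

open Classical in
theorem stmt18_general (n : ℕ) (hn : 2 ≤ n) (l : ℕ → ℕ)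
    (hanti : ∀ a b : ℕ, 1 ≤ a → a ≤ b → l b ≤ l a)
    (hreg : ∀ a : ℕ, 1 ≤ a → 0 < l (a + (n - 1)) → l (a + (n - 1)) < l a)
    (s : ℕ) (hs1 : 1 ≤ s)
    (hsmax : l (s + 1) < l s)
    (k : ℕ)
    (hladder : ∀ j, j < k →
      (∀ a b, s + j * (n - 1) + 1 ≤ a → a ≤ b → b ≤ s + (j + 1) * (n - 1) → l a = l b) ∧
        l (s + j * (n - 1)) = l (s + j * (n - 1) + 1) + 1)
    (hkmax : ¬((∀ a b, s + k * (n - 1) + 1 ≤ a → a ≤ b → b ≤ s + (k + 1) * (n - 1) →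
        l a = l b) ∧ l (s + k * (n - 1)) = l (s + k * (n - 1) + 1) + 1)) :
    (∀ a b : ℕ, 1 ≤ a → a ≤ b →
      (if ∃ j ≤ k, b = s + j * (n - 1) then l b - 1 else l b) ≤
        (if ∃ j ≤ k, a = s + j * (n - 1) then l a - 1 else l a)) ∧
    (∀ a : ℕ, 1 ≤ a →
      0 < (if ∃ j ≤ k, a + (n - 1) = s + j * (n - 1) then l (a + (n - 1)) - 1
        else l (a + (n - 1))) →
      (if ∃ j ≤ k, a + (n - 1) = s + j * (n - 1) then l (a + (n - 1)) - 1
        else l (a + (n - 1))) < (if ∃ j ≤ k, a = s + j * (n - 1) then l a - 1 else l a)) := by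
  have hm : 1 ≤ n - 1 := by omega
  exact ⟨fun a b ha hab => lower_anti hm hanti hreg hs1 hsmax hladder ha hab,
    fun a ha hpos => lower_add_lt hm hanti hreg hs1 hsmax hladder hkmax ha hpos⟩

open Classical in
/-- The "ladder method": let `λ` be an `n`-regular partition (parts `l 1 ≥ l 2 ≥ ⋯`,
1-indexed, eventually zero), let `s ≥ 1` be maximal with `λ_1 = ⋯ = λ_s > λ_{s+1}`, and let
`k ≥ 0` be maximal such that for all `0 ≤ j ≤ k-1`,
`λ_{s+j(n-1)+1} = ⋯ = λ_{s+(j+1)(n-1)}` and `λ_{s+j(n-1)} = λ_{s+j(n-1)+1} + 1`.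
Define `μ` by subtracting `1` from the parts at the ladder positions
`a = s + j(n-1)`, `0 ≤ j ≤ k`, and leaving the remaining parts unchanged.
Then `μ` is again an `n`-regular partition. -/
theorem stmt18 (n : ℕ) (hn : 2 ≤ n) (l : ℕ → ℕ)
    (hanti : ∀ a b : ℕ, 1 ≤ a → a ≤ b → l b ≤ l a)
    (hfin : ∃ N, ∀ j, N ≤ j → l j = 0)
    (hreg : ∀ a : ℕ, 1 ≤ a → 0 < l (a + (n - 1)) → l (a + (n - 1)) < l a)
    (s : ℕ) (hs1 : 1 ≤ s) (hpos : 0 < l s)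
    (hsconst : ∀ a, 1 ≤ a → a ≤ s → l a = l 1)
    (hsmax : l (s + 1) < l s)
    (k : ℕ)
    (hladder : ∀ j, j < k →
      (∀ a b, s + j * (n - 1) + 1 ≤ a → a ≤ b → b ≤ s + (j + 1) * (n - 1) → l a = l b) ∧
        l (s + j * (n - 1)) = l (s + j * (n - 1) + 1) + 1)
    (hkmax : ¬((∀ a b, s + k * (n - 1) + 1 ≤ a → a ≤ b → b ≤ s + (k + 1) * (n - 1) →
        l a = l b) ∧ l (s + k * (n - 1)) = l (s + k * (n - 1) + 1) + 1)) :
    (∀ a b : ℕ, 1 ≤ a → a ≤ b →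
      (if ∃ j ≤ k, b = s + j * (n - 1) then l b - 1 else l b) ≤
        (if ∃ j ≤ k, a = s + j * (n - 1) then l a - 1 else l a)) ∧
    (∀ a : ℕ, 1 ≤ a →
      0 < (if ∃ j ≤ k, a + (n - 1) = s + j * (n - 1) then l (a + (n - 1)) - 1
        else l (a + (n - 1))) →
      (if ∃ j ≤ k, a + (n - 1) = s + j * (n - 1) then l (a + (n - 1)) - 1
        else l (a + (n - 1))) < (if ∃ j ≤ k, a = s + j * (n - 1) then l a - 1 else l a)) :=
  stmt18_general n hn l hanti hreg s hs1 hsmax k hladder hkmax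
end

section
/- Suppose a bar-involution x ↦ x̄ on a free ℤ[v,v^{−1}]-module with basis {|λ⟩ : λ ∈ Π} indexed by a poset Π with finite lower intervals satisfies |λ⟩‾ = |λ⟩ + ∑_{μ < λ} a_{μ,λ}|μ⟩ with a_{μ,λ} ∈ ℤ[v,v^{−1}], and is a semilinear involution (v̄ = v^{−1}, involutive). Then there is a unique basis {b_λ} with b̄_λ = b_λ and b_λ ∈ |λ⟩ + ∑_{μ < λ} v^{−1}ℤ[v^{−1}]|μ⟩. -/
/-!
Uniqueness: the difference of two solutions is bar-invariant with all coefficients in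
`v⁻¹ℤ[v⁻¹]`. At a maximal point of its support, unitriangularity makes its coefficient `f`
satisfy `invert f = f`, which forces `f = 0`.

Existence, by well-founded induction: `b_p = |p⟩ + z` where `z - bar z = bar |p⟩ - |p⟩`. This
right-hand side `d` is anti-invariant, and so is its coefficient `c` at a maximal point `μ` of
its support; hence `c = γ - invert γ` with `γ ∈ v⁻¹ℤ[v⁻¹]`, and subtracting `c • b_μ` from `d`
(adding `γ • b_μ` to `z`) removes `μ` from the finite lower set carrying `d`.
-/

open LaurentPolynomial

namespace LaurentPolynomial

variable {R : Type*} [CommRing R]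

variable (R) in
/-- `v⁻¹ R[v⁻¹]`, with `v = T 1`. -/
def negPart : Submodule R R[T;T⁻¹] where
  carrier := {f | ∀ n : ℤ, 0 ≤ n → f.coeff n = 0}
  add_mem' hf hg n hn := by simp [hf n hn, hg n hn]
  zero_mem' _ _ := rfl
  smul_mem' c f hf n hn := by simp [hf n hn]

theorem mul_mem_negPart {f g : R[T;T⁻¹]} (hf : f ∈ negPart R) (hg : g ∈ negPart R) :
    f * g ∈ negPart R := by
  classical
  intro n hn
  by_contra h
  obtain ⟨i, hi, j, hj, rfl⟩ := Finset.mem_add.mp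
    (AddMonoidAlgebra.support_coeff_mul_subset f g (Finsupp.mem_support_iff.mpr h))
  have hi' : i < 0 := not_le.mp fun h0 => Finsupp.mem_support_iff.mp hi (hf i h0)
  have hj' : j < 0 := not_le.mp fun h0 => Finsupp.mem_support_iff.mp hj (hg j h0)
  omega

theorem eq_zero_of_invert_eq_self_of_mem_negPart {f : R[T;T⁻¹]} (hf : f ∈ negPart R)
    (hinv : invert f = f) : f = 0 := by
  refine AddMonoidAlgebra.coeff_eq_zero.mp (Finsupp.ext fun n => ?_)
  rcases le_or_gt 0 n with hn | hn
  · exact hf n hn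
  · rw [← hinv, invert_apply]
    exact hf (-n) (by omega)

theorem exists_mem_negPart_sub_invert_eq [IsAddTorsionFree R] {c : R[T;T⁻¹]}
    (hc : invert c = -c) : ∃ γ ∈ negPart R, γ - invert γ = c := by
  have hcoeff (n : ℤ) : c.coeff (-n) = -c.coeff n := by
    simpa using congrArg (fun f : R[T;T⁻¹] => f.coeff n) hc
  have hc0 : c.coeff 0 = 0 := self_eq_neg.mp (by simpa using hcoeff 0)
  refine ⟨AddMonoidAlgebra.ofCoeff (c.coeff.filter (· < 0)), fun n hn => by simp [hn.not_gt], ?_⟩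
  refine AddMonoidAlgebra.coeff_inj.mp (Finsupp.ext fun n => ?_)
  rcases lt_trichotomy n 0 with hn | rfl | hn
  · simp [hn, hn.le]
  · simp [hc0]
  · simp [hn, hn.not_gt, hcoeff]

end LaurentPolynomial

theorem wellFounded_lt_of_finite_Iic {P : Type*} [PartialOrder P]
    (hfin : ∀ x : P, (Set.Iic x).Finite) : WellFounded (α := P) (· < ·) :=
  Subrelation.wf (fun {_ b} hab => Set.ncard_lt_ncard (Set.Iic_ssubset_Iic.mpr hab) (hfin b))
    (measure fun x => (Set.Iic x).ncard).wf

theorem IsLowerSet.finset_erase_of_maximal {P : Type*} [PartialOrder P] [DecidableEq P]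
    {s : Finset P} (hs : IsLowerSet (s : Set P)) {μ : P} (hμ : Maximal (· ∈ s) μ) :
    IsLowerSet (s.erase μ : Set P) := by
  rw [Finset.coe_erase]
  rintro a c hca ⟨hc, hcμ⟩
  refine ⟨hs hca hc, ?_⟩
  rintro rfl
  exact hcμ (hμ.eq_of_ge hc hca)

namespace CanonicalBasis

variable {P R : Type*} [CommRing R]

def IsSemilinear (bar : (P →₀ R[T;T⁻¹]) →+ (P →₀ R[T;T⁻¹])) : Prop :=
  ∀ (c : R[T;T⁻¹]) (x : P →₀ R[T;T⁻¹]), bar (c • x) = invert c • bar x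

variable {bar : (P →₀ R[T;T⁻¹]) →+ (P →₀ R[T;T⁻¹])}

theorem IsSemilinear.map_single (hsemi : IsSemilinear bar) (p : P) (c : R[T;T⁻¹]) :
    bar (Finsupp.single p c) = invert c • bar (Finsupp.single p 1) := by
  rw [← hsemi, Finsupp.smul_single_one]

variable [PartialOrder P]

def IsUnitriangular (bar : (P →₀ R[T;T⁻¹]) →+ (P →₀ R[T;T⁻¹])) : Prop :=
  ∀ p q : P, (bar (Finsupp.single p 1) - Finsupp.single p 1 : P →₀ R[T;T⁻¹]) q ≠ 0 → q < p

/-- `b = b_p`: bar-invariant and in `|p⟩ + ∑_{q < p} v⁻¹R[v⁻¹] |q⟩`. -/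
def IsCanonical (bar : (P →₀ R[T;T⁻¹]) →+ (P →₀ R[T;T⁻¹])) (b : P →₀ R[T;T⁻¹]) (p : P) : Prop :=
  bar b = b ∧ b p = 1 ∧ ∀ q : P, q ≠ p → (b q ≠ 0 → q < p) ∧ b q ∈ negPart R

theorem apply_bar_of_forall_not_lt (hsemi : IsSemilinear bar) (htri : IsUnitriangular bar)
    {x : P →₀ R[T;T⁻¹]} {μ : P} (hμ : ∀ ν ∈ x.support, ¬ μ < ν) :
    bar x μ = invert (x μ) := by
  classical
  have hdiag : ∀ ν ∈ x.support, bar (Finsupp.single ν 1) μ = Finsupp.single ν 1 μ :=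
    fun ν hν => by_contra fun h => hμ ν hν (htri ν μ (by rwa [Finsupp.sub_apply, sub_ne_zero]))
  calc bar x μ = ∑ ν ∈ x.support, invert (x ν) * bar (Finsupp.single ν 1) μ := by
        conv_lhs => rw [← x.sum_single, map_finsuppSum]
        rw [Finsupp.sum_apply, Finsupp.sum]
        exact Finset.sum_congr rfl fun ν _ => by
          rw [hsemi.map_single, Finsupp.smul_apply, smul_eq_mul]
    _ = ∑ ν ∈ x.support, invert (x ν) * Finsupp.single ν 1 μ :=
        Finset.sum_congr rfl fun ν hν => by rw [hdiag ν hν]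
    _ = invert (x μ) := by
        simp only [Finsupp.single_apply, mul_ite, mul_one, mul_zero, Finset.sum_ite_eq']
        split_ifs with h
        · rfl
        · rw [Finsupp.notMem_support_iff.mp h, map_zero]

theorem IsCanonical.le_of_ne_zero {b : P →₀ R[T;T⁻¹]} {p q : P} (hb : IsCanonical bar b p)
    (hq : b q ≠ 0) : q ≤ p := by
  rcases eq_or_ne q p with rfl | hqp
  · exact le_rfl
  · exact ((hb.2.2 q hqp).1 hq).le

theorem IsCanonical.mul_apply_mem_negPart {b : P →₀ R[T;T⁻¹]} {p : P} (hb : IsCanonical bar b p)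
    {γ : R[T;T⁻¹]} (hγ : γ ∈ negPart R) (q : P) : γ * b q ∈ negPart R := by
  rcases eq_or_ne q p with rfl | hqp
  · rwa [hb.2.1, mul_one]
  · exact mul_mem_negPart hγ (hb.2.2 q hqp).2

theorem eq_zero_of_bar_eq_self (hsemi : IsSemilinear bar) (htri : IsUnitriangular bar)
    {x : P →₀ R[T;T⁻¹]} (hbar : bar x = x) (hx : ∀ q, x q ∈ negPart R) : x = 0 := by
  by_contra hx0
  obtain ⟨μ, hμ⟩ := x.support.exists_maximal (Finsupp.support_nonempty_iff.mpr hx0)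
  have htop : invert (x μ) = x μ := by
    rw [← apply_bar_of_forall_not_lt hsemi htri fun ν hν => hμ.not_gt hν, hbar]
  exact Finsupp.mem_support_iff.mp hμ.prop (eq_zero_of_invert_eq_self_of_mem_negPart (hx μ) htop)

theorem IsCanonical.eq (hsemi : IsSemilinear bar) (htri : IsUnitriangular bar)
    {b b' : P →₀ R[T;T⁻¹]} {p : P} (hb : IsCanonical bar b p) (hb' : IsCanonical bar b' p) :
    b = b' := by
  refine sub_eq_zero.mp
    (eq_zero_of_bar_eq_self hsemi htri (by rw [map_sub, hb.1, hb'.1]) fun q => ?_)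
  rcases eq_or_ne q p with rfl | hqp
  · simp [hb.2.1, hb'.2.1]
  · exact sub_mem (hb.2.2 q hqp).2 (hb'.2.2 q hqp).2

theorem exists_sub_bar_eq [IsAddTorsionFree R] (hsemi : IsSemilinear bar)
    (htri : IsUnitriangular bar) {s : Finset P} (hs : IsLowerSet (s : Set P))
    (hB : ∀ μ ∈ s, ∃ b, IsCanonical bar b μ) {d : P →₀ R[T;T⁻¹]} (hd : bar d = -d)
    (hds : d.support ⊆ s) :
    ∃ z : P →₀ R[T;T⁻¹], z - bar z = d ∧ z.support ⊆ s ∧ ∀ q, z q ∈ negPart R := by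
  classical
  induction s using Finset.strongInduction generalizing d with
  | H s ih =>
  rcases s.eq_empty_or_nonempty with rfl | hne
  · obtain rfl : d = 0 := Finsupp.support_eq_empty.mp (Finset.subset_empty.mp hds)
    exact ⟨0, by simp, by simp, fun _ => zero_mem _⟩
  obtain ⟨μ, hμ⟩ := s.exists_maximal hne
  obtain ⟨b, hb⟩ := hB μ hμ.prop
  have hdμ : invert (d μ) = -d μ := by
    rw [← apply_bar_of_forall_not_lt hsemi htri fun ν hν => hμ.not_gt (hds hν), hd,
      Finsupp.neg_apply]
  obtain ⟨γ, hγ, hγd⟩ := exists_mem_negPart_sub_invert_eq hdμ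
  have hbs : b.support ⊆ s := fun ν hν =>
    hs (hb.le_of_ne_zero (Finsupp.mem_support_iff.mp hν)) hμ.prop
  set d' := d - d μ • b with hd'
  have hbard' : bar d' = -d' := by
    rw [hd', map_sub, hsemi, hd, hb.1, hdμ, neg_smul]
    abel
  have hd's : d'.support ⊆ s.erase μ := by
    intro ν hν
    refine Finset.mem_erase.mpr ⟨?_, ?_⟩
    · rintro rfl
      exact Finsupp.mem_support_iff.mp hν (by simp [hd', hb.2.1])
    · exact Finset.union_subset hds ((Finsupp.support_smul).trans hbs) (Finsupp.support_sub hν)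
  obtain ⟨z, hz, hzs, hzneg⟩ := ih (s.erase μ) (Finset.erase_ssubset hμ.prop)
    (hs.finset_erase_of_maximal hμ) (fun ν hν => hB ν (Finset.mem_of_mem_erase hν)) hbard' hd's
  refine ⟨z + γ • b, ?_, ?_, fun q => ?_⟩
  · calc z + γ • b - bar (z + γ • b) = (z - bar z) + (γ - invert γ) • b := by
          rw [map_add, hsemi, hb.1, sub_smul]; abel
      _ = d := by rw [hz, hγd, hd', sub_add_cancel]
  · exact Finsupp.support_add.trans
      (Finset.union_subset (hzs.trans (Finset.erase_subset μ s)) (Finsupp.support_smul.trans hbs))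
  · exact add_mem (hzneg q) (hb.mul_apply_mem_negPart hγ q)

theorem exists_isCanonical [IsAddTorsionFree R] (hsemi : IsSemilinear bar)
    (htri : IsUnitriangular bar) (hinv : ∀ x, bar (bar x) = x) {p : P} (hIio : (Set.Iio p).Finite)
    (hB : ∀ μ < p, ∃ b, IsCanonical bar b μ) : ∃ b, IsCanonical bar b p := by
  set d := bar (Finsupp.single p 1) - Finsupp.single p 1 with hd
  have hbard : bar d = -d := by
    rw [hd, map_sub, hinv]
    abel
  have hds : d.support ⊆ hIio.toFinset := fun q hq =>
    hIio.mem_toFinset.mpr (htri p q (Finsupp.mem_support_iff.mp hq))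
  obtain ⟨z, hz, hzs, hzneg⟩ := exists_sub_bar_eq hsemi htri (by simpa using isLowerSet_Iio p)
    (fun μ hμ => hB μ (hIio.mem_toFinset.mp hμ)) hbard hds
  have hzlt (q : P) (hq : z q ≠ 0) : q < p :=
    hIio.mem_toFinset.mp (hzs (Finsupp.mem_support_iff.mpr hq))
  refine ⟨Finsupp.single p 1 + z, ?_, ?_, fun q hqp => ?_⟩
  · have hbarz : bar z = z - d := by rw [← hz, sub_sub_cancel]
    rw [map_add, hbarz, hd]
    abel
  · rw [Finsupp.add_apply, Finsupp.single_eq_same, not_imp_comm.mp (hzlt p) (lt_irrefl p), add_zero]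
  · rw [Finsupp.add_apply, Finsupp.single_eq_of_ne hqp, zero_add]
    exact ⟨hzlt q, hzneg q⟩

end CanonicalBasis

/-- Existence and uniqueness of the IC/canonical basis (Lusztig, Du):
let `Π` be a poset with finite principal lower sets, and let the free
`ℤ[v, v⁻¹]`-module on `Π` (with `ℤ[v,v⁻¹]` realized as Laurent polynomials, `v = T 1`)
carry a semilinear bar-involution (`v ↦ v⁻¹` is `LaurentPolynomial.invert`) satisfying
`bar |λ⟩ = |λ⟩ + ∑_{μ < λ} a_{μ,λ} |μ⟩`.  Then there is a unique basis `{b_λ}` with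
`bar b_λ = b_λ` and `b_λ ∈ |λ⟩ + ∑_{μ < λ} v⁻¹ ℤ[v⁻¹] |μ⟩` (the coefficient of `b_λ` at
`μ ≠ λ` is supported in negative powers of `v` and vanishes unless `μ < λ`). -/
theorem stmt19 (P : Type) [PartialOrder P]
    (hfin : ∀ x : P, {y : P | y ≤ x}.Finite)
    (bar : (P →₀ LaurentPolynomial ℤ) →+ (P →₀ LaurentPolynomial ℤ))
    (hsemi : ∀ (c : LaurentPolynomial ℤ) (x : P →₀ LaurentPolynomial ℤ),
      bar (c • x) = (LaurentPolynomial.invert c) • bar x)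
    (hinv : ∀ x, bar (bar x) = x)
    (htri : ∀ p q : P, (bar (Finsupp.single p 1) - Finsupp.single p 1 : P →₀ LaurentPolynomial ℤ) q ≠ 0 → q < p) :
    ∃! b : P → (P →₀ LaurentPolynomial ℤ),
      ∀ p : P, bar (b p) = b p ∧ (b p) p = 1 ∧
        ∀ q : P, q ≠ p →
          ((b p) q ≠ 0 → q < p) ∧ (∀ d : ℤ, 0 ≤ d → (AddMonoidAlgebra.coeff ((b p) q)) d = 0) := by
  have hexists (p : P) : ∃ b, CanonicalBasis.IsCanonical bar b p :=
    (wellFounded_lt_of_finite_Iic hfin).induction p fun p ih =>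
      CanonicalBasis.exists_isCanonical hsemi htri hinv
        ((hfin p).subset Set.Iio_subset_Iic_self) ih
  choose b hb using hexists
  exact ⟨b, hb, fun b' hb' => funext fun p =>
    CanonicalBasis.IsCanonical.eq hsemi htri (hb' p) (hb p)⟩
end
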